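/- arXiv:2002.08937 — 2 statements merged into one kernel-verified Lean document; each statement's English description precedes it below -/
import Mathlib

section
/- With the same notation, ‖Σ_i α̂_i x̃_i − Σ_i α̃_i x_i‖ ≤ ‖K − K̃‖₂^{1/2} ‖α̃‖₂ + ‖K‖₂^{1/2} ‖α̂ − α̃‖₂, where ‖·‖₂ denotes the matrix spectral norm and the vector Euclidean norm respectively. -/
open scoped RealInnerProductSpace

lemma quad_eq {H : Type*} [NormedAddCommGroup H] [InnerProductSpace ℝ H] {n : ℕ}
    (z : Fin n → H) (β : Fin n → ℝ) :
    ∑ i, ∑ j, β i * ⟪z i, z j⟫ * β j = ‖∑ i, β i • z i‖ ^ 2 := by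
  rw [← real_inner_self_eq_norm_sq, sum_inner]
  refine Finset.sum_congr rfl fun i _ => ?_
  rw [inner_sum]
  refine Finset.sum_congr rfl fun j _ => ?_
  rw [real_inner_smul_left, real_inner_smul_right]; ring

lemma aux_bound {H : Type*} [NormedAddCommGroup H] [InnerProductSpace ℝ H] {n : ℕ}
    (y z : Fin n → H) (M : Matrix (Fin n) (Fin n) ℝ)
    (hM : ∀ i j, M i j = ⟪z i, z j⟫)
    (hyz : ∀ β : EuclideanSpace ℝ (Fin n),
      ‖∑ i, β i • y i‖ ^ 2 ≤ ∑ i, ∑ j, β i * M i j * β j)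
    (β : EuclideanSpace ℝ (Fin n)) :
    ‖∑ i, β i • y i‖ ≤ Real.sqrt (sSup {r : ℝ | ∃ α : EuclideanSpace ℝ (Fin n),
      ‖α‖ = 1 ∧ r = ∑ i, ∑ j, α i * M i j * α j}) * ‖β‖ := by
  set S := {r : ℝ | ∃ α : EuclideanSpace ℝ (Fin n),
      ‖α‖ = 1 ∧ r = ∑ i, ∑ j, α i * M i j * α j} with hS
  have hbdd : BddAbove S := by
    refine ⟨(∑ i, ‖z i‖) ^ 2, ?_⟩
    rintro r ⟨α, hα, rfl⟩
    have h1 : ∀ i, |α i| ≤ 1 := by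
      intro i
      have hn := EuclideanSpace.norm_eq α
      simp_rw [Real.norm_eq_abs, sq_abs] at hn
      have hsum : ∑ j, α j ^ 2 = 1 := by
        have h2 : Real.sqrt (∑ j, α j ^ 2) = 1 := by rw [← hn, hα]
        have := Real.sq_sqrt (Finset.sum_nonneg (fun j (_ : j ∈ Finset.univ) => sq_nonneg (α j)))
        nlinarith
      have hsingle : α i ^ 2 ≤ 1 := by
        rw [← hsum]
        exact Finset.single_le_sum (f := fun j => α j ^ 2)
          (fun j _ => sq_nonneg (α j)) (Finset.mem_univ i)
      nlinarith [abs_nonneg (α i), sq_abs (α i)]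
    calc ∑ i, ∑ j, α i * M i j * α j = ‖∑ i, α i • z i‖ ^ 2 := by
          simp_rw [hM]; exact quad_eq z α
      _ ≤ (∑ i, ‖α i • z i‖) ^ 2 := by
          have := norm_sum_le Finset.univ (fun i => α i • z i)
          nlinarith [norm_nonneg (∑ i, α i • z i),
            Finset.sum_nonneg (fun i (_ : i ∈ Finset.univ) => norm_nonneg (α i • z i))]
      _ ≤ (∑ i, ‖z i‖) ^ 2 := by
          have hle : ∑ i, ‖α i • z i‖ ≤ ∑ i, ‖z i‖ := by
            refine Finset.sum_le_sum fun i _ => ?_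
            rw [norm_smul, Real.norm_eq_abs]
            nlinarith [h1 i, norm_nonneg (z i), abs_nonneg (α i)]
          nlinarith [Finset.sum_nonneg (fun i (_ : i ∈ Finset.univ) => norm_nonneg (α i • z i)),
            Finset.sum_nonneg (fun i (_ : i ∈ Finset.univ) => norm_nonneg (z i))]
  by_cases hβ : β = 0
  · simp [hβ]
  · have hβn : (0:ℝ) < ‖β‖ := norm_pos_iff.mpr hβ
    set α : EuclideanSpace ℝ (Fin n) := ‖β‖⁻¹ • β with hαdef
    have hα1 : ‖α‖ = 1 := by
      rw [hαdef, norm_smul, norm_inv, norm_norm, inv_mul_cancel₀ hβn.ne']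
    have hαi : ∀ i, α i = ‖β‖⁻¹ * β i := fun i => rfl
    have hmem : (∑ i, ∑ j, α i * M i j * α j) ∈ S := ⟨α, hα1, rfl⟩
    have hle : (∑ i, ∑ j, α i * M i j * α j) ≤ sSup S := le_csSup hbdd hmem
    have hnneg : 0 ≤ sSup S := by
      have : (0:ℝ) ≤ ∑ i, ∑ j, α i * M i j * α j := by
        simp_rw [hM]; rw [quad_eq]; positivity
      linarith
    have hquad : (∑ i, ∑ j, β i * M i j * β j)
        = ‖β‖ ^ 2 * ∑ i, ∑ j, α i * M i j * α j := by
      simp_rw [hαi, Finset.mul_sum]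
      refine Finset.sum_congr rfl fun i _ => Finset.sum_congr rfl fun j _ => ?_
      field_simp
    have h2 : ‖∑ i, β i • y i‖ ^ 2 ≤ sSup S * ‖β‖ ^ 2 := by
      calc ‖∑ i, β i • y i‖ ^ 2 ≤ ∑ i, ∑ j, β i * M i j * β j := hyz β
        _ = ‖β‖ ^ 2 * ∑ i, ∑ j, α i * M i j * α j := hquad
        _ ≤ ‖β‖ ^ 2 * sSup S := by nlinarith [sq_nonneg ‖β‖]
        _ = sSup S * ‖β‖ ^ 2 := by ring
    calc ‖∑ i, β i • y i‖ = Real.sqrt (‖∑ i, β i • y i‖ ^ 2) :=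
          (Real.sqrt_sq (norm_nonneg _)).symm
      _ ≤ Real.sqrt (sSup S * ‖β‖ ^ 2) := Real.sqrt_le_sqrt h2
      _ = Real.sqrt (sSup S) * ‖β‖ := by
          rw [Real.sqrt_mul hnneg, Real.sqrt_sq (norm_nonneg β)]

/-- Approximation error bound: the spectral norms are expressed as the supremum
of the quadratic form over the unit sphere (valid for symmetric PSD matrices). -/
theorem approx_error_bound
    {H : Type*} [NormedAddCommGroup H] [InnerProductSpace ℝ H]
    {n s : ℕ} (x : Fin n → H) (b : Fin s → H) (hb : Orthonormal ℝ b)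
    (xt : Fin n → H) (hxt : ∀ i, xt i = ∑ j, ⟪b j, x i⟫ • b j)
    (K Kt : Matrix (Fin n) (Fin n) ℝ)
    (hK : ∀ i j, K i j = ⟪x i, x j⟫)
    (hKt : ∀ i j, Kt i j = ⟪xt i, xt j⟫)
    (αh αt : EuclideanSpace ℝ (Fin n)) :
    ‖(∑ i, αh i • xt i) - ∑ i, αt i • x i‖
      ≤ Real.sqrt (sSup {r : ℝ | ∃ α : EuclideanSpace ℝ (Fin n), ‖α‖ = 1 ∧
            r = ∑ i, ∑ j, α i * (K - Kt) i j * α j}) * ‖αt‖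
        + Real.sqrt (sSup {r : ℝ | ∃ α : EuclideanSpace ℝ (Fin n), ‖α‖ = 1 ∧
            r = ∑ i, ∑ j, α i * K i j * α j}) * ‖αh - αt‖ := by
  have hbij : ∀ i j, ⟪b i, b j⟫ = if i = j then (1:ℝ) else 0 := by
    intro i j
    by_cases h : i = j
    · subst h; rw [real_inner_self_eq_norm_sq, hb.1 i]; simp
    · simp [h, hb.2 h]
  -- ⟪xt i, x j⟫ = Kt i j
  have hcross : ∀ i j, ⟪xt i, x j⟫ = Kt i j := by
    intro i j
    rw [hKt]
    conv_rhs => rw [hxt j]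
    rw [hxt i]
    rw [sum_inner, sum_inner]
    refine Finset.sum_congr rfl fun k _ => ?_
    rw [real_inner_smul_left, real_inner_smul_left, inner_sum]
    simp_rw [real_inner_smul_right, hbij]
    simp
  have hKtsymm : ∀ i j, Kt i j = Kt j i := by
    intro i j; rw [hKt, hKt, real_inner_comm]
  have hcross' : ∀ i j, ⟪x i, xt j⟫ = Kt i j := by
    intro i j; rw [real_inner_comm, hcross, hKtsymm]
  -- entries of K - Kt
  have hMdiff : ∀ i j, (K - Kt) i j = ⟪xt i - x i, xt j - x j⟫ := by
    intro i j
    rw [inner_sub_left, inner_sub_right, inner_sub_right]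
    rw [hcross i j, hcross' i j, ← hKt i j, ← hK i j]
    simp [Matrix.sub_apply]
  -- first bound
  have h1 : ‖∑ i, αt i • (xt i - x i)‖
      ≤ Real.sqrt (sSup {r : ℝ | ∃ α : EuclideanSpace ℝ (Fin n), ‖α‖ = 1 ∧
            r = ∑ i, ∑ j, α i * (K - Kt) i j * α j}) * ‖αt‖ := by
    refine aux_bound (fun i => xt i - x i) (fun i => xt i - x i) (K - Kt) hMdiff
      (fun β => ?_) αt
    have : ∑ i, ∑ j, β i * (K - Kt) i j * β j
        = ‖∑ i, β i • (xt i - x i)‖ ^ 2 := by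
      simp_rw [hMdiff]; exact quad_eq (fun i => xt i - x i) β
    rw [this]
  -- second bound
  have h2 : ‖∑ i, (αh - αt) i • xt i‖
      ≤ Real.sqrt (sSup {r : ℝ | ∃ α : EuclideanSpace ℝ (Fin n), ‖α‖ = 1 ∧
            r = ∑ i, ∑ j, α i * K i j * α j}) * ‖αh - αt‖ := by
    refine aux_bound xt x K hK (fun β => ?_) (αh - αt)
    have e1 : ∑ i, ∑ j, β i * Kt i j * β j = ‖∑ i, β i • xt i‖ ^ 2 := by
      simp_rw [hKt]; exact quad_eq xt β
    have e2 : ∑ i, ∑ j, β i * (K - Kt) i j * β j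
        = ‖∑ i, β i • (xt i - x i)‖ ^ 2 := by
      simp_rw [hMdiff]; exact quad_eq (fun i => xt i - x i) β
    have e3 : ∑ i, ∑ j, β i * K i j * β j
        = (∑ i, ∑ j, β i * Kt i j * β j) + ∑ i, ∑ j, β i * (K - Kt) i j * β j := by
      rw [← Finset.sum_add_distrib]
      refine Finset.sum_congr rfl fun i _ => ?_
      rw [← Finset.sum_add_distrib]
      refine Finset.sum_congr rfl fun j _ => ?_
      simp [Matrix.sub_apply]; ring
    rw [e3, e1]
    nlinarith [e2, sq_nonneg ‖∑ i, β i • (xt i - x i)‖]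
  -- decomposition
  have hdecomp : (∑ i, αh i • xt i) - ∑ i, αt i • x i
      = (∑ i, αt i • (xt i - x i)) + ∑ i, (αh - αt) i • xt i := by
    have : ∀ i, (αh - αt) i = αh i - αt i := fun i => rfl
    simp_rw [this, smul_sub, sub_smul, Finset.sum_sub_distrib]
    abel
  rw [hdecomp]
  calc ‖(∑ i, αt i • (xt i - x i)) + ∑ i, (αh - αt) i • xt i‖
      ≤ ‖∑ i, αt i • (xt i - x i)‖ + ‖∑ i, (αh - αt) i • xt i‖ := norm_add_le _ _
    _ ≤ _ := add_le_add h1 h2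
end

section
/- Let C = (c_1,...,c_m) be a tuple in a real inner product space H with c_j = Σ_i P_{ij} x_i for some matrix P ∈ ℝ^{n×m} (landmarks lie in the span of the data x_1,...,x_n). Let A ∈ ℝ^{m×s} be such that the tuple B = C A is orthonormal (⟨b_i, b_j⟩ = δ_{ij}). Let x̃_i be the orthogonal projection of x_i onto span(b_1,...,b_s). Then span(x̃_1,...,x̃_n) = span(b_1,...,b_s). -/
open scoped RealInnerProductSpace
open Matrix

/-- If the landmarks lie in the span of the data, then the span of the
projected data equals the span of the orthonormal basis. -/
theorem span_projected_eq_span_basis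
    {H : Type*} [NormedAddCommGroup H] [InnerProductSpace ℝ H]
    {n m s : ℕ} (x : Fin n → H)
    (P : Matrix (Fin n) (Fin m) ℝ) (c : Fin m → H)
    (hc : ∀ j, c j = ∑ i, P i j • x i)
    (A : Matrix (Fin m) (Fin s) ℝ) (b : Fin s → H)
    (hbA : ∀ j, b j = ∑ i, A i j • c i)
    (hb : Orthonormal ℝ b)
    (xt : Fin n → H) (hxt : ∀ i, xt i = ∑ j, ⟪b j, x i⟫ • b j) :
    Submodule.span ℝ (Set.range xt) = Submodule.span ℝ (Set.range b) := by
  set M : Matrix (Fin n) (Fin s) ℝ := P * A with hM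
  have hbx : ∀ k, b k = ∑ l, M l k • x l := by
    intro k
    rw [hbA]
    simp only [hc, Finset.smul_sum, smul_smul, hM, Matrix.mul_apply]
    rw [Finset.sum_comm]
    refine Finset.sum_congr rfl fun l _ => ?_
    rw [Finset.sum_smul]
    simp [mul_comm]
  have horth : ∀ j k, ∑ l, M l k * ⟪b j, x l⟫ = if j = k then (1:ℝ) else 0 := by
    intro j k
    have := orthonormal_iff_ite.mp hb j k
    rw [hbx k, inner_sum] at this
    simpa [real_inner_smul_right, mul_comm] using this
  have key : ∀ k, b k = ∑ l, M l k • xt l := by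
    intro k
    simp only [hxt, Finset.smul_sum, smul_smul]
    rw [Finset.sum_comm]
    have : ∀ j : Fin s, ∑ l, (M l k * ⟪b j, x l⟫) • b j
        = (if j = k then (1:ℝ) else 0) • b j := by
      intro j
      rw [← Finset.sum_smul, horth]
    rw [Finset.sum_congr rfl fun j _ => this j]
    simp
  apply le_antisymm <;> rw [Submodule.span_le] <;> rintro _ ⟨i, rfl⟩
  · rw [hxt]
    exact Submodule.sum_mem _ fun j _ =>
      Submodule.smul_mem _ _ (Submodule.subset_span ⟨j, rfl⟩)
  · rw [key]
    exact Submodule.sum_mem _ fun l _ =>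
      Submodule.smul_mem _ _ (Submodule.subset_span ⟨l, rfl⟩)
end
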